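/- The per-region goodput vanishes at large rates: lim_{r→∞} G(r) = 0, where G(r) = r·∫_φ^{φ'} f(γ)·(1 − Ω(γ, r)) dγ. -/

import Mathlib

/-!
On the region, `1 - Ω(γ, r) = Q((r - C(γ))·√(n/V(γ)))` with `C(γ) ≤ C(φ')` and `V(γ) ≤ 1`, so once
`r ≥ C(φ')` the integrand is bounded uniformly by `sup |f| · Q(√n·(r - C(φ')))`. The Gaussian tail
`Q(y) ≤ exp(-y²/2)` for `y ≥ 1` decays fast enough to absorb the factor `r`.
-/

open MeasureTheory intervalIntegral Real Filter Topology

/-- Gaussian Q-function: Q(t) = (1/√(2π)) ∫_t^∞ exp(−u²/2) du. -/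
noncomputable def Qfun (t : ℝ) : ℝ :=
  (Real.sqrt (2 * Real.pi))⁻¹ * ∫ u in Set.Ioi t, Real.exp (-u ^ 2 / 2)

/-- Capacity C(γ) = log(1 + P γ) (natural log). -/
noncomputable def Cap (P γ : ℝ) : ℝ := Real.log (1 + P * γ)

/-- Channel dispersion V(γ) = 1 − 1/(1 + P γ)². -/
noncomputable def Vdisp (P γ : ℝ) : ℝ := 1 - 1 / (1 + P * γ) ^ 2

/-- Codeword error probability Ω(γ, r) = Q((C(γ) − r)·√(n/V(γ))). -/
noncomputable def Omega (n P γ r : ℝ) : ℝ :=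
  Qfun ((Cap P γ - r) * Real.sqrt (n / Vdisp P γ))

/-- H(γ, r) = −(1/√(2π))·exp(−n(C(γ)−r)²/(2V(γ)))·f(γ)·√(n/V(γ)). -/
noncomputable def Hfun (n P : ℝ) (f : ℝ → ℝ) (γ r : ℝ) : ℝ :=
  -(Real.sqrt (2 * Real.pi))⁻¹ * Real.exp (-(n * (Cap P γ - r) ^ 2) / (2 * Vdisp P γ)) *
    f γ * Real.sqrt (n / Vdisp P γ)

lemma integrable_exp_neg_sq_div_two : Integrable (fun u : ℝ => exp (-u ^ 2 / 2)) := by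
  simpa [div_eq_inv_mul, neg_mul] using integrable_exp_neg_mul_sq (by norm_num : (0 : ℝ) < 2⁻¹)

lemma integral_exp_neg_sq_div_two : ∫ u : ℝ, exp (-u ^ 2 / 2) = √(2 * π) := by
  have h := integral_gaussian (2⁻¹ : ℝ)
  rw [show π / 2⁻¹ = 2 * π by ring] at h
  simpa [div_eq_inv_mul, neg_mul] using h

lemma Qfun_nonneg (x : ℝ) : 0 ≤ Qfun x :=
  mul_nonneg (by positivity) (setIntegral_nonneg measurableSet_Ioi fun u _ => (exp_pos _).le)

lemma Qfun_antitone : Antitone Qfun := fun x y hxy =>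
  mul_le_mul_of_nonneg_left
    (setIntegral_mono_set integrable_exp_neg_sq_div_two.integrableOn
      (.of_forall fun u => (exp_pos _).le) (Set.Ioi_subset_Ioi hxy).eventuallyLE)
    (by positivity)

lemma Qfun_add_Qfun_neg (x : ℝ) : Qfun x + Qfun (-x) = 1 := by
  have hreflect : ∫ u in Set.Ioi (-x), exp (-u ^ 2 / 2) = ∫ u in Set.Iic x, exp (-u ^ 2 / 2) := by
    have h := integral_comp_neg_Ioi (-x) fun u : ℝ => exp (-u ^ 2 / 2)
    simp only [neg_sq, neg_neg] at h
    exact h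
  have hsplit := integral_add_compl measurableSet_Iic integrable_exp_neg_sq_div_two (s := Set.Iic x)
  rw [Set.compl_Iic, integral_exp_neg_sq_div_two] at hsplit
  rw [Qfun, Qfun, hreflect, ← mul_add, add_comm, hsplit, inv_mul_cancel₀ (by positivity)]

lemma hasDerivAt_neg_exp_neg_sq_div_two (u : ℝ) :
    HasDerivAt (fun u : ℝ => -exp (-u ^ 2 / 2)) (u * exp (-u ^ 2 / 2)) u := by
  refine ((((hasDerivAt_pow 2 u).fun_neg.div_const 2).exp).fun_neg).congr_deriv ?_
  simp only [neg_div]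
  ring

lemma tendsto_neg_exp_neg_sq_div_two :
    Tendsto (fun u : ℝ => -exp (-u ^ 2 / 2)) atTop (𝓝 0) := by
  simpa using (tendsto_exp_atBot.comp <|
    (tendsto_neg_atTop_atBot.comp (tendsto_pow_atTop two_ne_zero)).atBot_div_const two_pos).neg

lemma integrableOn_Ioi_mul_exp_neg_sq_div_two {y : ℝ} (hy : 0 ≤ y) :
    IntegrableOn (fun u : ℝ => u * exp (-u ^ 2 / 2)) (Set.Ioi y) :=
  integrableOn_Ioi_deriv_of_nonneg' (fun u _ => hasDerivAt_neg_exp_neg_sq_div_two u)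
    (fun _ hu => mul_nonneg (hy.trans hu.le) (exp_pos _).le) tendsto_neg_exp_neg_sq_div_two

lemma integral_Ioi_mul_exp_neg_sq_div_two {y : ℝ} (hy : 0 ≤ y) :
    ∫ u in Set.Ioi y, u * exp (-u ^ 2 / 2) = exp (-y ^ 2 / 2) := by
  rw [integral_Ioi_of_hasDerivAt_of_nonneg' (fun u _ => hasDerivAt_neg_exp_neg_sq_div_two u)
    (fun _ hu => mul_nonneg (hy.trans hu.le) (exp_pos _).le) tendsto_neg_exp_neg_sq_div_two]
  ring

lemma Qfun_le_exp_neg_sq_div_two {y : ℝ} (hy : 1 ≤ y) : Qfun y ≤ exp (-y ^ 2 / 2) := by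
  have hconst : (√(2 * π))⁻¹ ≤ 1 :=
    inv_le_one_of_one_le₀ (one_le_sqrt.2 (by nlinarith [pi_gt_three]))
  calc Qfun y ≤ ∫ u in Set.Ioi y, exp (-u ^ 2 / 2) :=
        mul_le_of_le_one_left
          (setIntegral_nonneg measurableSet_Ioi fun _ _ => (exp_pos _).le) hconst
    _ ≤ ∫ u in Set.Ioi y, u * exp (-u ^ 2 / 2) :=
        setIntegral_mono_on integrable_exp_neg_sq_div_two.integrableOn
          (integrableOn_Ioi_mul_exp_neg_sq_div_two (zero_le_one.trans hy)) measurableSet_Ioi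
          fun _ hu => le_mul_of_one_le_left (exp_pos _).le (hy.trans hu.le)
    _ = exp (-y ^ 2 / 2) := integral_Ioi_mul_exp_neg_sq_div_two (zero_le_one.trans hy)

lemma tendsto_mul_Qfun_mul_sub {a : ℝ} (ha : 0 < a) (c : ℝ) :
    Tendsto (fun r => r * Qfun (a * (r - c))) atTop (𝓝 0) := by
  have hdecay : Tendsto (fun r => exp (a * c / 2) * (r * exp (-(a / 2) * r))) atTop (𝓝 0) := by
    simpa using (tendsto_rpow_mul_exp_neg_mul_atTop_nhds_zero 1 (a / 2) (by positivity)).const_mul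
      (exp (a * c / 2))
  refine squeeze_zero' ?_ ?_ hdecay
  · filter_upwards [eventually_ge_atTop 0] with r hr
    exact mul_nonneg hr (Qfun_nonneg _)
  · filter_upwards [eventually_ge_atTop (max 0 (c + 1 / a))] with r hr
    have hr0 : 0 ≤ r := le_of_max_le_left hr
    have hy : 1 ≤ a * (r - c) := by
      have := le_of_max_le_right hr
      rw [← div_le_iff₀' ha]
      linarith
    calc r * Qfun (a * (r - c)) ≤ r * exp (-(a * (r - c)) ^ 2 / 2) :=
          mul_le_mul_of_nonneg_left (Qfun_le_exp_neg_sq_div_two hy) hr0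
      _ ≤ r * exp (-(a * (r - c)) / 2) := by gcongr; nlinarith
      _ = exp (a * c / 2) * (r * exp (-(a / 2) * r)) := by
          rw [mul_left_comm, ← exp_add]
          ring_nf

lemma Vdisp_pos {P γ : ℝ} (h : 0 < P * γ) : 0 < Vdisp P γ := by
  rw [Vdisp, sub_pos, div_lt_one (by positivity)]
  nlinarith

lemma Vdisp_le_one (P γ : ℝ) : Vdisp P γ ≤ 1 := by
  rw [Vdisp, sub_le_self_iff]
  positivity

lemma Cap_le_Cap {P γ γ' : ℝ} (hP : 0 ≤ P) (hγ : 0 ≤ γ) (hγγ' : γ ≤ γ') : Cap P γ ≤ Cap P γ' :=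
  log_le_log (by positivity) (by gcongr)

lemma one_sub_Omega (n P γ r : ℝ) :
    1 - Omega n P γ r = Qfun ((r - Cap P γ) * √(n / Vdisp P γ)) := by
  rw [Omega, sub_eq_iff_eq_add, ← Qfun_add_Qfun_neg ((r - Cap P γ) * √(n / Vdisp P γ)),
    ← neg_mul, neg_sub]

lemma one_sub_Omega_le {n P γ γ' r : ℝ} (hn : 0 ≤ n) (hP : 0 < P) (hγ : 0 < γ) (hγγ' : γ ≤ γ')
    (hr : Cap P γ' ≤ r) : 1 - Omega n P γ r ≤ Qfun (√n * (r - Cap P γ')) := by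
  have hV := Vdisp_pos (mul_pos hP hγ)
  have hsqrt : √n ≤ √(n / Vdisp P γ) :=
    sqrt_le_sqrt ((le_div_iff₀ hV).2 (mul_le_of_le_one_right hn (Vdisp_le_one P γ)))
  rw [one_sub_Omega]
  refine Qfun_antitone ?_
  have hCap := Cap_le_Cap hP.le hγ.le hγγ'
  rw [mul_comm]
  exact mul_le_mul (by linarith) hsqrt (sqrt_nonneg _) (by linarith)

lemma norm_integral_mul_one_sub_Omega_le {n P φ φ' M r : ℝ} {f : ℝ → ℝ} (hn : 0 ≤ n)
    (hP : 0 < P) (hφ : 0 < φ) (hφφ' : φ ≤ φ') (hM : ∀ γ ∈ Set.Icc φ φ', ‖f γ‖ ≤ M)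
    (hr : Cap P φ' ≤ r) :
    ‖∫ γ in φ..φ', f γ * (1 - Omega n P γ r)‖ ≤ M * (φ' - φ) * Qfun (√n * (r - Cap P φ')) := by
  have hintegrand : ∀ γ ∈ Set.uIoc φ φ',
      ‖f γ * (1 - Omega n P γ r)‖ ≤ M * Qfun (√n * (r - Cap P φ')) := by
    intro γ hγ
    rw [Set.uIoc_of_le hφφ'] at hγ
    have hfγ := hM γ (Set.Ioc_subset_Icc_self hγ)
    have hΩ : 0 ≤ 1 - Omega n P γ r := one_sub_Omega n P γ r ▸ Qfun_nonneg _
    rw [norm_mul, Real.norm_of_nonneg hΩ]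
    exact mul_le_mul hfγ (one_sub_Omega_le hn hP (hφ.trans hγ.1) hγ.2 hr) hΩ
      ((norm_nonneg _).trans hfγ)
  calc ‖∫ γ in φ..φ', f γ * (1 - Omega n P γ r)‖
      ≤ M * Qfun (√n * (r - Cap P φ')) * |φ' - φ| := norm_integral_le_of_norm_le_const hintegrand
    _ = M * (φ' - φ) * Qfun (√n * (r - Cap P φ')) := by
        rw [abs_of_nonneg (sub_nonneg.2 hφφ')]
        ring

theorem goodput_tendsto_zero_general (n P : ℝ) (hn : 0 < n) (hP : 0 < P)
    (f : ℝ → ℝ) (hf : Continuous f)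
    (φ φ' : ℝ) (hφ : 0 < φ) (hφφ' : φ < φ') :
    Tendsto (fun r : ℝ => r * ∫ γ in φ..φ', f γ * (1 - Omega n P γ r)) atTop (𝓝 0) := by
  obtain ⟨M, hM⟩ := isCompact_Icc.exists_bound_of_continuousOn (hf.continuousOn (s := Set.Icc φ φ'))
  have hbound : ∀ᶠ r in atTop, ‖r * ∫ γ in φ..φ', f γ * (1 - Omega n P γ r)‖ ≤
      M * (φ' - φ) * (r * Qfun (√n * (r - Cap P φ'))) := by
    filter_upwards [eventually_ge_atTop (max 0 (Cap P φ'))] with r hr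
    have hr0 : 0 ≤ r := le_of_max_le_left hr
    rw [norm_mul, Real.norm_of_nonneg hr0, mul_left_comm]
    exact mul_le_mul_of_nonneg_left (norm_integral_mul_one_sub_Omega_le hn.le hP hφ hφφ'.le hM
      (le_of_max_le_right hr)) hr0
  exact squeeze_zero_norm' hbound <| by
    simpa using (tendsto_mul_Qfun_mul_sub (sqrt_pos.2 hn) (Cap P φ')).const_mul (M * (φ' - φ))

theorem goodput_tendsto_zero (n P : ℝ) (hn : 0 < n) (hP : 0 < P)
    (f : ℝ → ℝ) (hf : Continuous f) (hfpos : ∀ γ : ℝ, 0 < γ → 0 < f γ)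
    (φ φ' : ℝ) (hφ : 0 < φ) (hφφ' : φ < φ') :
    Tendsto (fun r : ℝ => r * ∫ γ in φ..φ', f γ * (1 - Omega n P γ r)) atTop (𝓝 0) :=
  goodput_tendsto_zero_general n P hn hP f hf φ φ' hφ hφφ'
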